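/- arXiv:math/0001178 — 9 statements merged into one kernel-verified Lean document; each statement's English description precedes it below -/
import Mathlib

section
/- Suppose A is derivation-simple with respect to D. If u ∈ A is nonzero and there is a function α : D → F with d(u) = α(d)·u for all d ∈ D, then u is invertible in A (i.e., there exists v ∈ A with uv = 1). -/
/- STATEMENT 4: if A is derivation-simple with respect to D, u ≠ 0 and d(u) = α(d)·u for all d ∈ D (for some function α : D → F), then u is invertible in A. -/

noncomputable section

/-- `A` is derivation-simple with respect to `D`: there is no `F`-subspace `I` of `A` with
`I ≠ {0}`, `I ≠ A`, `u·I ⊆ I` for all `u ∈ A`, and `d(I) ⊆ I` for all `d ∈ D`. -/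
def DerivationSimple (F : Type*) [Field F] (A : Type*) [CommRing A] [Algebra F A]
    (D : Submodule F (Module.End F A)) : Prop :=
  ∀ I : Submodule F A, (∀ u : A, ∀ x ∈ I, u * x ∈ I) →
    (∀ d ∈ D, ∀ x ∈ I, d x ∈ I) → I = ⊥ ∨ I = ⊤

theorem root_vector_isUnit (F : Type*) [Field F] [IsAlgClosed F] [CharZero F]
    (A : Type*) [CommRing A] [Algebra F A] (D : Submodule F (Module.End F A))
    (hder : ∀ d ∈ D, ∀ u v : A, d (u * v) = d u * v + u * d v)
    (hds : DerivationSimple F A D)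
    (u : A) (hu : u ≠ 0) (α : ↥D → F)
    (hα : ∀ d : ↥D, (d : Module.End F A) u = α d • u) :
    ∃ v : A, u * v = 1 := by
  set I : Submodule F A := Submodule.restrictScalars F (Ideal.span {u}) with hI
  have hmul : ∀ a : A, ∀ x ∈ I, a * x ∈ I := fun a x hx => Ideal.mul_mem_left _ a hx
  have hdstab : ∀ d ∈ D, ∀ x ∈ I, d x ∈ I := by
    intro d hd x hx
    rw [hI, Submodule.restrictScalars_mem, Ideal.mem_span_singleton] at hx ⊢
    obtain ⟨c, rfl⟩ := hx
    have := hder d hd u c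
    rw [this, hα ⟨d, hd⟩]
    exact dvd_add ⟨α ⟨d, hd⟩ • c, by rw [smul_mul_assoc, mul_smul_comm]⟩ ⟨d c, rfl⟩
  rcases hds I hmul hdstab with h | h
  · exfalso; apply hu
    have : u ∈ I := Ideal.mem_span_singleton_self u
    rw [h] at this
    simpa using this
  · have : (1 : A) ∈ I := by rw [h]; trivial
    rw [hI, Submodule.restrictScalars_mem, Ideal.mem_span_singleton] at this
    obtain ⟨v, hv⟩ := this
    exact ⟨v, hv.symm⟩
end
end

section
/- Suppose A is derivation-simple with respect to D. Then F₁ := {u ∈ A : d(u) = 0 for all d ∈ D} is a subfield of A containing F·1: it is a subalgebra, and every nonzero element u of F₁ is invertible in A with u⁻¹ ∈ F₁. -/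
/- STATEMENT 5: if A is derivation-simple with respect to D, then F₁ = {u ∈ A : d(u) = 0 ∀ d ∈ D} is a subfield of A containing F·1: a subalgebra all of whose nonzero elements are invertible with inverse in F₁. -/

noncomputable section

theorem kernel_is_subfield (F : Type*) [Field F] [IsAlgClosed F] [CharZero F]
    (A : Type*) [CommRing A] [Algebra F A] (D : Submodule F (Module.End F A))
    (hder : ∀ d ∈ D, ∀ u v : A, d (u * v) = d u * v + u * d v)
    (hds : DerivationSimple F A D)
    (F₁ : Set A) (hF₁ : F₁ = {u : A | ∀ d : ↥D, (d : Module.End F A) u = 0}) :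
    (∀ c : F, algebraMap F A c ∈ F₁) ∧
    (∀ u ∈ F₁, ∀ v ∈ F₁, u + v ∈ F₁) ∧
    (∀ (c : F), ∀ u ∈ F₁, c • u ∈ F₁) ∧
    (∀ u ∈ F₁, ∀ v ∈ F₁, u * v ∈ F₁) ∧
    (∀ u ∈ F₁, u ≠ 0 → ∃ v ∈ F₁, u * v = 1) := by
  subst hF₁
  have h1 : ∀ d : ↥D, (d : Module.End F A) 1 = 0 := by
    intro d
    have := hder d d.2 1 1
    simp only [mul_one, one_mul] at this
    exact (left_eq_add.mp this)
  refine ⟨?_, ?_, ?_, ?_, ?_⟩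
  · intro c d
    have : (algebraMap F A c : A) = c • (1 : A) := (Algebra.algebraMap_eq_smul_one c)
    rw [this, map_smul, h1, smul_zero]
  · intro u hu v hv d
    rw [map_add, hu d, hv d, add_zero]
  · intro c u hu d
    rw [map_smul, hu d, smul_zero]
  · intro u hu v hv d
    rw [hder d d.2 u v, hu d, hv d, zero_mul, mul_zero, add_zero]
  · intro u hu hu0
    set I : Submodule F A := LinearMap.range (LinearMap.mulLeft F u) with hI
    have hmem : ∀ x : A, x ∈ I ↔ ∃ y : A, u * y = x := by
      intro x
      simp [hI, LinearMap.mem_range, LinearMap.mulLeft_apply]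
    have hItop : I = ⊤ := by
      rcases hds I (fun w x hx => by
          rcases (hmem x).mp hx with ⟨y, hy⟩
          exact (hmem _).mpr ⟨w * y, by rw [← hy]; ring⟩)
        (fun d hd x hx => by
          rcases (hmem x).mp hx with ⟨y, hy⟩
          refine (hmem _).mpr ⟨d y, ?_⟩
          have := hder d hd u y
          rw [hu ⟨d, hd⟩] at this
          simp only [zero_mul, zero_add] at this
          rw [← hy, this]) with h | h
      · exfalso
        have : u ∈ I := (hmem u).mpr ⟨1, mul_one u⟩
        rw [h] at this
        exact hu0 (Submodule.mem_bot F |>.mp this)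
      · exact h
    have h1I : (1 : A) ∈ I := hItop ▸ Submodule.mem_top
    rcases (hmem 1).mp h1I with ⟨v, hv⟩
    refine ⟨v, ?_, hv⟩
    intro d
    have h0 : (d : Module.End F A) (u * v) = 0 := by rw [hv]; exact h1 d
    rw [hder d d.2 u v, hu d, zero_mul, zero_add] at h0
    calc (d : Module.End F A) v = (u * v) * (d : Module.End F A) v := by rw [hv, one_mul]
      _ = v * (u * (d : Module.End F A) v) := by ring
      _ = 0 := by rw [h0, mul_zero]
end
end

section
/- Suppose A is derivation-simple with respect to D. Let Γ be the set of all F-linear functionals α : D → F such that there exists a nonzero u ∈ A with d(u) = α(d)·u for all d ∈ D. Then Γ is an additive subgroup of the dual space of D: 0 ∈ Γ, and for all α, β ∈ Γ one has α + β ∈ Γ and −α ∈ Γ. -/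
/- STATEMENT 6: if A is derivation-simple with respect to D, the set Γ of F-linear functionals α on D admitting a nonzero simultaneous eigenvector (d(u) = α(d)·u) is an additive subgroup of D*. -/

noncomputable section

lemma weights_key (F : Type*) [Field F]
    (A : Type*) [CommRing A] [Algebra F A] [Nontrivial A]
    (D : Submodule F (Module.End F A))
    (hder : ∀ d ∈ D, ∀ u v : A, d (u * v) = d u * v + u * d v)
    (hds : DerivationSimple F A D)
    (α : ↥D →ₗ[F] F) (u : A) (hu : u ≠ 0)
    (heig : ∀ d : ↥D, (d : Module.End F A) u = α d • u) :
    (∀ x : A, u * x = 0 → x = 0) ∧ ∃ w : A, u * w = 1 := by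
  constructor
  · -- kernel ideal is bot
    have h := hds (LinearMap.ker (LinearMap.mulLeft F u))
      (by
        intro v x hx
        simp only [LinearMap.mem_ker, LinearMap.mulLeft_apply] at *
        rw [mul_left_comm, hx, mul_zero])
      (by
        intro d hd x hx
        simp only [LinearMap.mem_ker, LinearMap.mulLeft_apply] at *
        have h1 : d (u * x) = d u * x + u * d x := hder d hd u x
        have h2 : d u * x = α ⟨d, hd⟩ • (u * x) := by
          have := heig ⟨d, hd⟩
          simp only [this]
          rw [smul_mul_assoc]
        rw [hx, smul_zero] at h2
        rw [h2, zero_add] at h1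
        rw [hx, map_zero] at h1
        exact h1.symm)
    rcases h with h | h
    · intro x hx
      have : x ∈ LinearMap.ker (LinearMap.mulLeft F u) := by
        simpa [LinearMap.mem_ker] using hx
      rw [h] at this
      simpa using this
    · exfalso
      have : (1 : A) ∈ LinearMap.ker (LinearMap.mulLeft F u) := by rw [h]; trivial
      simp only [LinearMap.mem_ker, LinearMap.mulLeft_apply, mul_one] at this
      exact hu this
  · -- range ideal is top
    have h := hds (LinearMap.range (LinearMap.mulLeft F u))
      (by
        rintro v x ⟨y, rfl⟩
        exact ⟨v * y, by simp [LinearMap.mulLeft_apply]; ring⟩)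
      (by
        rintro d hd x ⟨y, rfl⟩
        simp only [LinearMap.mulLeft_apply]
        refine ⟨α ⟨d, hd⟩ • y + d y, ?_⟩
        have h1 : d (u * y) = d u * y + u * d y := hder d hd u y
        have h2 : d u = α ⟨d, hd⟩ • u := heig ⟨d, hd⟩
        simp only [LinearMap.mulLeft_apply, h1, h2, smul_mul_assoc, mul_add, mul_smul_comm])
    rcases h with h | h
    · exfalso
      have : u ∈ LinearMap.range (LinearMap.mulLeft F u) := ⟨1, by simp⟩
      rw [h] at this
      simp only [Submodule.mem_bot] at this
      exact hu this
    · have : (1 : A) ∈ LinearMap.range (LinearMap.mulLeft F u) := by rw [h]; trivial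
      obtain ⟨w, hw⟩ := this
      exact ⟨w, hw⟩

theorem weights_addSubgroup (F : Type*) [Field F] [IsAlgClosed F] [CharZero F]
    (A : Type*) [CommRing A] [Algebra F A] [Nontrivial A]
    (D : Submodule F (Module.End F A))
    (hder : ∀ d ∈ D, ∀ u v : A, d (u * v) = d u * v + u * d v)
    (hds : DerivationSimple F A D)
    (Γ : Set (↥D →ₗ[F] F))
    (hΓ : Γ = {α : ↥D →ₗ[F] F |
      ∃ u : A, u ≠ 0 ∧ ∀ d : ↥D, (d : Module.End F A) u = α d • u}) :
    (0 : ↥D →ₗ[F] F) ∈ Γ ∧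
    (∀ α ∈ Γ, ∀ β ∈ Γ, α + β ∈ Γ) ∧
    (∀ α ∈ Γ, -α ∈ Γ) := by
  subst hΓ
  have hd1 : ∀ d : ↥D, (d : Module.End F A) 1 = 0 := by
    intro d
    have := hder d d.2 1 1
    simp only [mul_one, one_mul] at this
    exact left_eq_add.mp this
  refine ⟨⟨1, one_ne_zero, fun d => by simp [hd1 d]⟩, ?_, ?_⟩
  · rintro α ⟨u, hu, heu⟩ β ⟨v, hv, hev⟩
    obtain ⟨hreg, -⟩ := weights_key F A D hder hds α u hu heu
    refine ⟨u * v, fun h => hv (hreg v h), fun d => ?_⟩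
    have := hder d d.2 u v
    rw [heu d, hev d] at this
    rw [this]
    simp only [LinearMap.add_apply, add_smul, smul_mul_assoc, mul_smul_comm]
  · rintro α ⟨u, hu, heu⟩
    obtain ⟨hreg, w, hw⟩ := weights_key F A D hder hds α u hu heu
    have hwne : w ≠ 0 := by
      rintro rfl; rw [mul_zero] at hw; exact one_ne_zero hw.symm
    refine ⟨w, hwne, fun d => ?_⟩
    have h1 : (d : Module.End F A) (u * w) = (d : Module.End F A) u * w + u * (d : Module.End F A) w := hder d d.2 u w
    rw [hw, hd1 d, heu d, smul_mul_assoc] at h1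
    have h2 : u * ((d : Module.End F A) w + α d • w) = 0 := by
      rw [mul_add, mul_smul_comm]
      linear_combination -h1
    have := hreg _ h2
    rw [eq_neg_of_add_eq_zero_left this]
    simp
end
end

section
/- Suppose A is derivation-simple with respect to D, and set F₁ := {w ∈ A : d(w) = 0 for all d ∈ D}. Let α : D → F be a function and let u, v ∈ A be nonzero elements with d(u) = α(d)·u and d(v) = α(d)·v for all d ∈ D. Then v ∈ F₁·u; in other words, for each such α the simultaneous eigenspace A_α^{(0)} = {w ∈ A : d(w) = α(d)·w for all d ∈ D} is a one-dimensional vector space over the field F₁. -/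
/-! The principal ideal `A u` of an eigenvector `u` is stable under `D`, since
`d (b u) = (d b + α(d) b) u`. Derivation-simplicity therefore makes `u` a unit, and then
`c := v u⁻¹` satisfies `d(c) u = d(v) - c d(u) = α(d) (v - c u) = 0`, i.e. `d(c) = 0`. -/

noncomputable section

section

variable {F A : Type*} [Field F] [CommRing A] [Algebra F A]

theorem DerivationSimple.ideal_eq_bot_or_eq_top {D : Submodule F (Module.End F A)}
    (hds : DerivationSimple F A D) (I : Ideal A) (hI : ∀ d ∈ D, ∀ x ∈ I, d x ∈ I) :
    I = ⊥ ∨ I = ⊤ := by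
  have := hds (I.restrictScalars F) (fun u x hx => I.mul_mem_left u hx) hI
  rwa [Submodule.restrictScalars_eq_bot_iff, Submodule.restrictScalars_eq_top_iff] at this

theorem apply_mem_span_singleton_of_apply_eq_smul {d : Module.End F A}
    (hd : ∀ x y : A, d (x * y) = d x * y + x * d y) {u : A} {a : F} (hdu : d u = a • u)
    {x : A} (hx : x ∈ Ideal.span {u}) : d x ∈ Ideal.span {u} := by
  obtain ⟨b, rfl⟩ := Ideal.mem_span_singleton'.mp hx
  refine Ideal.mem_span_singleton'.mpr ⟨d b + a • b, ?_⟩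
  rw [hd, hdu, add_mul, smul_mul_assoc, mul_smul_comm]

theorem DerivationSimple.isUnit_of_apply_eq_smul {D : Submodule F (Module.End F A)}
    (hder : ∀ d ∈ D, ∀ x y : A, d (x * y) = d x * y + x * d y)
    (hds : DerivationSimple F A D) (α : ↥D → F) {u : A} (hu : u ≠ 0)
    (hαu : ∀ d : ↥D, (d : Module.End F A) u = α d • u) : IsUnit u := by
  have hstable : ∀ d ∈ D, ∀ x ∈ Ideal.span {u}, d x ∈ Ideal.span {u} := fun d hd _ hx =>
    apply_mem_span_singleton_of_apply_eq_smul (hder d hd) (hαu ⟨d, hd⟩) hx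
  rcases hds.ideal_eq_bot_or_eq_top _ hstable with hbot | htop
  · exact absurd (Ideal.span_singleton_eq_bot.mp hbot) hu
  · exact Ideal.span_singleton_eq_top.mp htop

theorem apply_eq_zero_of_mul_eq_of_apply_eq_smul {d : Module.End F A}
    (hd : ∀ x y : A, d (x * y) = d x * y + x * d y) {u v c : A} (hu : IsUnit u) {a : F}
    (hdu : d u = a • u) (hdv : d v = a • v) (hc : v = c * u) : d c = 0 := by
  have hleibniz : d v = d c * u + a • v := by
    rw [hc, hd, hdu, mul_smul_comm]
  rw [hdv] at hleibniz
  exact hu.mul_left_eq_zero.mp (right_eq_add.mp hleibniz)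

end

theorem eigenspace_one_dimensional_general (F : Type*) [Field F]
    (A : Type*) [CommRing A] [Algebra F A] (D : Submodule F (Module.End F A))
    (hder : ∀ d ∈ D, ∀ u v : A, d (u * v) = d u * v + u * d v)
    (hds : DerivationSimple F A D)
    (α : ↥D → F) (u v : A) (hu : u ≠ 0)
    (hαu : ∀ d : ↥D, (d : Module.End F A) u = α d • u)
    (hαv : ∀ d : ↥D, (d : Module.End F A) v = α d • v) :
    ∃ c : A, (∀ d : ↥D, (d : Module.End F A) c = 0) ∧ v = c * u := by
  have hunit : IsUnit u := hds.isUnit_of_apply_eq_smul hder α hu hαu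
  obtain ⟨c, hc⟩ := hunit.dvd (a := v)
  rw [mul_comm] at hc
  exact ⟨c, fun d => apply_eq_zero_of_mul_eq_of_apply_eq_smul (hder d d.2) hunit (hαu d)
    (hαv d) hc, hc⟩

theorem eigenspace_one_dimensional (F : Type*) [Field F] [IsAlgClosed F] [CharZero F]
    (A : Type*) [CommRing A] [Algebra F A] (D : Submodule F (Module.End F A))
    (hder : ∀ d ∈ D, ∀ u v : A, d (u * v) = d u * v + u * d v)
    (hds : DerivationSimple F A D)
    (α : ↥D → F) (u v : A) (hu : u ≠ 0) (hv : v ≠ 0)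
    (hαu : ∀ d : ↥D, (d : Module.End F A) u = α d • u)
    (hαv : ∀ d : ↥D, (d : Module.End F A) v = α d • v) :
    ∃ c : A, (∀ d : ↥D, (d : Module.End F A) c = 0) ∧ v = c * u :=
  eigenspace_one_dimensional_general F A D hder hds α u v hu hαu hαv
end
end

section
/- Suppose D is a finite-dimensional commutative locally-finite subalgebra of Der A and A is derivation-simple with respect to D. For an F-linear functional α on D, let A_α = {u ∈ A : for every d ∈ D there is m ∈ ℕ with (d − α(d))^m(u) = 0} denote the generalized weight space. If u ∈ A_α is nonzero and satisfies d(u) = α(d)·u for all d ∈ D, then A_α = u·A₀, where A₀ is the generalized weight space of the zero functional. -/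
/- STATEMENT 8: D finite-dimensional commutative locally-finite subalgebra of Der A, A derivation-simple w.r.t. D. If u ∈ A_α is nonzero with d(u) = α(d)·u for all d ∈ D, then A_α = u·A₀ (generalized weight spaces). -/

noncomputable section

theorem gen_weight_space_eq_mul (F : Type*) [Field F] [IsAlgClosed F] [CharZero F]
    (A : Type*) [CommRing A] [Algebra F A] (D : Submodule F (Module.End F A))
    [FiniteDimensional F ↥D]
    (hder : ∀ d ∈ D, ∀ u v : A, d (u * v) = d u * v + u * d v)
    (hcomm : ∀ d ∈ D, ∀ e ∈ D, d * e = e * d)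
    (hlf : ∀ d ∈ D, ∀ a : A,
      FiniteDimensional F (Submodule.span F (Set.range fun m : ℕ => (d ^ m) a)))
    (hds : DerivationSimple F A D)
    (α : ↥D →ₗ[F] F) (u : A) (hu : u ≠ 0)
    (hα : ∀ d : ↥D, (d : Module.End F A) u = α d • u) :
    {w : A | ∀ d : ↥D, ∃ m : ℕ, (((d : Module.End F A) - α d • 1) ^ m) w = 0} =
      (fun w => u * w) ''
        {w : A | ∀ d : ↥D, ∃ m : ℕ, ((d : Module.End F A) ^ m) w = 0} := by
  -- key computation: if d y = c • y then (d - (c+c')•1)^m (y*x) = y * ((d - c'•1)^m x)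
  have aux : ∀ d : Module.End F A, (∀ a b : A, d (a * b) = d a * b + a * d b) →
      ∀ (c c' : F) (y : A), d y = c • y →
      ∀ (m : ℕ) (x : A),
        ((d - (c + c') • 1) ^ m) (y * x) = y * (((d - c' • 1) ^ m) x) := by
    intro d hd c c' y hy m
    induction m with
    | zero => intro x; simp
    | succ m ih =>
      intro x
      have step : (d - (c + c') • 1) (y * x) = y * ((d - c' • 1) x) := by
        simp only [LinearMap.sub_apply, LinearMap.smul_apply, Module.End.one_apply, hd, hy,
          LinearMap.add_apply, smul_mul_assoc, mul_smul_comm, add_smul, mul_sub]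
        abel
      rw [pow_succ, pow_succ, Module.End.mul_apply, Module.End.mul_apply, step, ih]
  -- u is invertible
  obtain ⟨v, hv⟩ : ∃ v : A, u * v = 1 := by
    have hres := hds (LinearMap.range (LinearMap.mulLeft F u))
      (by rintro w x ⟨a, rfl⟩; exact ⟨w * a, by simp; ring⟩)
      (by
        rintro d hd x ⟨a, rfl⟩
        refine ⟨α ⟨d, hd⟩ • a + d a, ?_⟩
        simp only [LinearMap.mulLeft_apply]
        rw [hder d hd u a]
        have := hα ⟨d, hd⟩
        simp only at this
        rw [this]
        rw [mul_add, mul_smul_comm, smul_mul_assoc])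
    rcases hres with hbot | htop
    · exfalso
      have : u ∈ LinearMap.range (LinearMap.mulLeft F u) := ⟨1, by simp⟩
      rw [hbot] at this
      exact hu (by simpa using this)
    · have : (1 : A) ∈ LinearMap.range (LinearMap.mulLeft F u) := htop ▸ Submodule.mem_top
      obtain ⟨v, hv⟩ := this
      exact ⟨v, hv⟩
  -- d 1 = 0 for d ∈ D
  have h1 : ∀ d : ↥D, (d : Module.End F A) (1 : A) = 0 := by
    intro d
    have := hder d d.2 1 1
    simp only [mul_one, one_mul] at this
    have h2 : (d : Module.End F A) 1 + (d : Module.End F A) 1 = (d : Module.End F A) 1 := this.symm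
    exact add_eq_left.mp ((add_comm _ _).trans h2)
  -- v has weight -α
  have hv' : ∀ d : ↥D, (d : Module.End F A) v = (-(α d)) • v := by
    intro d
    have h0 : (d : Module.End F A) (u * v) = 0 := by rw [hv, h1]
    rw [hder d d.2 u v, hα d, smul_mul_assoc] at h0
    -- α d • (u*v) + u * d v = 0
    have hudv : u * (d : Module.End F A) v = -(α d • (u * v)) :=
      eq_neg_of_add_eq_zero_right h0
    calc (d : Module.End F A) v = (u * v) * (d : Module.End F A) v := by rw [hv, one_mul]
      _ = v * (u * (d : Module.End F A) v) := by ring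
      _ = v * (-(α d • (u * v))) := by rw [hudv]
      _ = (-(α d)) • v := by rw [hv]; simp [mul_smul_comm]
  ext w
  simp only [Set.mem_setOf_eq, Set.mem_image]
  constructor
  · intro hw
    refine ⟨v * w, ?_, by rw [← mul_assoc, hv, one_mul]⟩
    intro d
    obtain ⟨m, hm⟩ := hw d
    refine ⟨m, ?_⟩
    have := aux (d : Module.End F A) (hder d d.2) (-(α d)) (α d) v (hv' d) m w
    rw [hm, mul_zero] at this
    simpa using this
  · rintro ⟨x, hx, rfl⟩
    intro d
    obtain ⟨m, hm⟩ := hx d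
    refine ⟨m, ?_⟩
    have := aux (d : Module.End F A) (hder d d.2) (α d) 0 u (hα d) m x
    simp only [add_zero, zero_smul, sub_zero] at this
    rw [this, hm, mul_zero]
end
end

section
/- Let V be a vector space over an algebraically closed field F and let d₁, ..., d_k be pairwise commuting locally-finite F-linear endomorphisms of V. For α = (α₁,...,α_k) ∈ F^k let V_α = {v ∈ V : for each i ∈ {1,...,k} there is m ∈ ℕ with (d_i − α_i)^m(v) = 0}. Then V is the internal direct sum of the subspaces V_α over α ∈ F^k; that is, every v ∈ V is a finite sum of elements of the V_α, and the spaces V_α for distinct α are independent. -/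
/-!
Closing `span {v}` successively under each `dᵢ` gives a subspace that stays finite-dimensional by
local finiteness and stays invariant under the earlier `dⱼ` because they commute with `dᵢ`. On this
finite-dimensional invariant subspace the commuting `dᵢ` are simultaneously triangularizable over
the algebraically closed field, so `v` is a sum of simultaneous generalized eigenvectors.
Independence of the simultaneous generalized eigenspaces holds for any commuting family.
-/

open Set

namespace Module.End

variable {F V : Type*} [Field F] [AddCommGroup V] [Module F V]

def IsLocallyFinite (f : End F V) : Prop :=
  ∀ v : V, FiniteDimensional F (Submodule.span F (range fun m : ℕ => (f ^ m) v))

def orbitSpan (f : End F V) (W : Submodule F V) : Submodule F V :=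
  ⨆ m : ℕ, W.map (f ^ m)

variable {f g : End F V} {W : Submodule F V}

theorem le_orbitSpan : W ≤ orbitSpan f W :=
  le_iSup_of_le 0 (by rw [pow_zero, one_eq_id, Submodule.map_id])

theorem map_pow_le_orbitSpan (m : ℕ) : W.map (f ^ m) ≤ orbitSpan f W :=
  le_iSup (fun m => W.map (f ^ m)) m

theorem mapsTo_orbitSpan_self : MapsTo f (orbitSpan f W) (orbitSpan f W) := by
  suffices (orbitSpan f W).map f ≤ orbitSpan f W from fun x hx => this ⟨x, hx, rfl⟩
  rw [orbitSpan, Submodule.map_iSup]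
  refine iSup_le fun m => ?_
  rw [← Submodule.map_comp, ← mul_eq_comp, ← pow_succ']
  exact map_pow_le_orbitSpan (m + 1)

theorem mapsTo_orbitSpan_of_commute (hgf : Commute g f) (hg : MapsTo g W W) :
    MapsTo g (orbitSpan f W) (orbitSpan f W) := by
  suffices (orbitSpan f W).map g ≤ orbitSpan f W from fun x hx => this ⟨x, hx, rfl⟩
  rw [orbitSpan, Submodule.map_iSup]
  refine iSup_le fun m => ?_
  rw [← Submodule.map_comp, ← mul_eq_comp, (hgf.pow_right m).eq, mul_eq_comp,
    Submodule.map_comp]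
  exact (Submodule.map_mono (Submodule.map_le_iff_le_comap.mpr fun x hx => hg hx)).trans
    (map_pow_le_orbitSpan m)

theorem IsLocallyFinite.finiteDimensional_orbitSpan (hf : f.IsLocallyFinite)
    [FiniteDimensional F W] : FiniteDimensional F (orbitSpan f W) := by
  obtain ⟨s, rfl⟩ := (Submodule.fg_iff_finiteDimensional W).mpr ‹_›
  have := fun x : s => hf x
  refine Submodule.finiteDimensional_of_le (iSup_le fun m => ?_ :
    orbitSpan f (Submodule.span F s) ≤ ⨆ x : s, Submodule.span F (range fun m => (f ^ m) x))
  rw [Submodule.map_span, Submodule.span_le]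
  rintro - ⟨x, hx, rfl⟩
  exact Submodule.mem_iSup_of_mem ⟨x, hx⟩ (Submodule.subset_span ⟨m, rfl⟩)

theorem exists_finiteDimensional_mapsTo {ι : Type*} {d : ι → End F V}
    (hcomm : Pairwise fun i j => Commute (d i) (d j)) (hlf : ∀ i, (d i).IsLocallyFinite)
    (s : Finset ι) (v : V) :
    ∃ W : Submodule F V, FiniteDimensional F W ∧ v ∈ W ∧ ∀ i ∈ s, MapsTo (d i) W W := by
  classical
  induction s using Finset.induction_on with
  | empty => exact ⟨F ∙ v, inferInstance, Submodule.mem_span_singleton_self v, by simp⟩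
  | insert j s hj ih =>
    obtain ⟨W, hW, hvW, hWs⟩ := ih
    refine ⟨orbitSpan (d j) W, (hlf j).finiteDimensional_orbitSpan, le_orbitSpan hvW, ?_⟩
    rintro i hi
    rcases Finset.mem_insert.mp hi with rfl | hi
    · exact mapsTo_orbitSpan_self
    · exact mapsTo_orbitSpan_of_commute (hcomm (ne_of_mem_of_not_mem hi hj)) (hWs i hi)

theorem le_iSup_iInf_maxGenEigenspace_of_mapsTo [IsAlgClosed F] {ι : Type*} {d : ι → End F V}
    (hcomm : Pairwise fun i j => Commute (d i) (d j)) (W : Submodule F V)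
    [FiniteDimensional F W] (hW : ∀ i, MapsTo (d i) W W) :
    W ≤ ⨆ χ : ι → F, ⨅ i, (d i).maxGenEigenspace (χ i) := by
  have htop := iSup_iInf_maxGenEigenspace_eq_top_of_iSup_maxGenEigenspace_eq_top_of_commute
    (fun i => (d i).restrict (hW i))
    (fun i j hij => LinearMap.restrict_commute (hcomm hij) (hW i) (hW j))
    (fun i => iSup_maxGenEigenspace_eq_top _)
  calc W = (⨆ χ : ι → F, ⨅ i, maxGenEigenspace ((d i).restrict (hW i)) (χ i)).map W.subtype := by
        rw [htop, Submodule.map_top, Submodule.range_subtype]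
    _ = ⨆ χ : ι → F, W ⊓ ⨅ i, (d i).maxGenEigenspace (χ i) := by
        simp_rw [Submodule.map_iSup, Submodule.inf_iInf_maxGenEigenspace_of_forall_mapsTo d W hW]
    _ ≤ _ := iSup_mono fun _ => inf_le_right

theorem iSup_iInf_maxGenEigenspace_eq_top_of_isLocallyFinite [IsAlgClosed F] {ι : Type*}
    [Finite ι] {d : ι → End F V} (hcomm : Pairwise fun i j => Commute (d i) (d j))
    (hlf : ∀ i, (d i).IsLocallyFinite) :
    ⨆ χ : ι → F, ⨅ i, (d i).maxGenEigenspace (χ i) = ⊤ := by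
  have := Fintype.ofFinite ι
  refine eq_top_iff.mpr fun v _ => ?_
  obtain ⟨W, hW, hvW, hWd⟩ := exists_finiteDimensional_mapsTo hcomm hlf Finset.univ v
  exact le_iSup_iInf_maxGenEigenspace_of_mapsTo hcomm W (fun i => hWd i (Finset.mem_univ i)) hvW

end Module.End

open Module.End in
theorem gen_weight_space_decomposition (F : Type*) [Field F] [IsAlgClosed F]
    (V : Type*) [AddCommGroup V] [Module F V] (k : ℕ)
    (d : Fin k → Module.End F V)
    (hcomm : ∀ i j, d i * d j = d j * d i)
    (hlf : ∀ i, ∀ v : V,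
      FiniteDimensional F (Submodule.span F (Set.range fun m : ℕ => (d i ^ m) v)))
    (Vsp : (Fin k → F) → Submodule F V)
    (hVsp : ∀ α : Fin k → F, (Vsp α : Set V) =
      {v : V | ∀ i, ∃ m : ℕ, ((d i - α i • (1 : Module.End F V)) ^ m) v = 0}) :
    iSupIndep Vsp ∧ (⨆ α : Fin k → F, Vsp α) = ⊤ := by
  have hVsp_eq : Vsp = fun α => ⨅ i, (d i).maxGenEigenspace (α i) := by
    ext α v
    rw [← SetLike.mem_coe, hVsp, mem_iInf_maxGenEigenspace_iff]
    rfl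
  subst hVsp_eq
  exact ⟨independent_iInf_maxGenEigenspace_of_forall_mapsTo d
      fun i j φ => mapsTo_maxGenEigenspace_of_comm (hcomm j i) φ,
    iSup_iInf_maxGenEigenspace_eq_top_of_isLocallyFinite (fun i j _ => hcomm i j) hlf⟩
end

section
/- Let V be a vector space over a field F, let d₁, ..., d_k be pairwise commuting F-linear endomorphisms of V, and let α = (α₁,...,α_k) ∈ F^k. If there is a nonzero u ∈ V such that for each i there exists m_i ∈ ℕ with (d_i − α_i)^{m_i}(u) = 0, then there exists a nonzero v ∈ V with d_i(v) = α_i·v for all i ∈ {1,...,k}. -/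
/- STATEMENT 11: commuting endomorphisms with a common nonzero generalized eigenvector for
α = (α₁,...,α_k) admit a common nonzero eigenvector for α. -/

theorem exists_simultaneous_eigenvector (F : Type*) [Field F]
    (V : Type*) [AddCommGroup V] [Module F V] (k : ℕ)
    (d : Fin k → Module.End F V)
    (hcomm : ∀ i j, d i * d j = d j * d i)
    (α : Fin k → F) (u : V) (hu : u ≠ 0)
    (h : ∀ i, ∃ m : ℕ, ((d i - α i • (1 : Module.End F V)) ^ m) u = 0) :
    ∃ v : V, v ≠ 0 ∧ ∀ i, d i v = α i • v := by
  classical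
  have hsmul : ∀ (c : F) (x : Module.End F V),
      Commute x (c • (1 : Module.End F V)) := by
    intro c x
    show x * (c • 1) = (c • 1) * x
    rw [mul_smul_comm, smul_mul_assoc, mul_one, one_mul]
  have hcom : ∀ i j, Commute (d i) (d j - α j • (1 : Module.End F V)) := by
    intro i j
    exact (show Commute (d i) (d j) from hcomm i j).sub_right (hsmul (α j) (d i))
  have hcom2 : ∀ i j, Commute (d i - α i • (1 : Module.End F V))
      (d j - α j • (1 : Module.End F V)) := by
    intro i j
    exact (hcom i j).sub_left
      (((hsmul (α i) (d j)).symm).sub_right (hsmul (α j) (α i • (1 : Module.End F V))))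
  suffices H : ∀ s : Finset (Fin k), ∃ v : V, v ≠ 0 ∧
      (∀ i ∈ s, d i v = α i • v) ∧
      (∀ i, ∃ m : ℕ, ((d i - α i • (1 : Module.End F V)) ^ m) v = 0) by
    obtain ⟨v, hv0, hve, -⟩ := H Finset.univ
    exact ⟨v, hv0, fun i => hve i (Finset.mem_univ i)⟩
  intro s
  induction s using Finset.induction with
  | empty => exact ⟨u, hu, by simp, h⟩
  | @insert a s ha ih =>
    obtain ⟨v, hv0, hve, hvg⟩ := ih
    obtain ⟨m, hm⟩ := hvg a
    have hex : ∃ n, ((d a - α a • (1 : Module.End F V)) ^ n) v = 0 := ⟨m, hm⟩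
    have hn : ((d a - α a • (1 : Module.End F V)) ^ Nat.find hex) v = 0 :=
      Nat.find_spec hex
    have hn1 : Nat.find hex ≠ 0 := by
      intro h0
      apply hv0
      simpa [h0] using hn
    have hw0 : ((d a - α a • (1 : Module.End F V)) ^ (Nat.find hex - 1)) v ≠ 0 := by
      have := Nat.find_min hex (m := Nat.find hex - 1) (Nat.pred_lt hn1)
      simpa using this
    refine ⟨((d a - α a • (1 : Module.End F V)) ^ (Nat.find hex - 1)) v, hw0, ?_, ?_⟩
    · have hfw : (d a - α a • (1 : Module.End F V))
          (((d a - α a • (1 : Module.End F V)) ^ (Nat.find hex - 1)) v) = 0 := by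
        rw [← Module.End.mul_apply, ← pow_succ',
          Nat.sub_add_cancel (Nat.one_le_iff_ne_zero.mpr hn1)]
        exact hn
      have haw : d a (((d a - α a • (1 : Module.End F V)) ^ (Nat.find hex - 1)) v)
          = α a • ((d a - α a • (1 : Module.End F V)) ^ (Nat.find hex - 1)) v := by
        rw [LinearMap.sub_apply, LinearMap.smul_apply, Module.End.one_apply,
          sub_eq_zero] at hfw
        exact hfw
      intro i hi
      rcases Finset.mem_insert.mp hi with rfl | hi
      · exact haw
      · have hc : Commute (d i) ((d a - α a • (1 : Module.End F V)) ^ (Nat.find hex - 1)) :=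
          (hcom i a).pow_right (Nat.find hex - 1)
        rw [← Module.End.mul_apply, hc, Module.End.mul_apply, hve i hi, map_smul]
    · intro i
      obtain ⟨m', hm'⟩ := hvg i
      refine ⟨m', ?_⟩
      have hc : Commute ((d i - α i • (1 : Module.End F V)) ^ m')
          ((d a - α a • (1 : Module.End F V)) ^ (Nat.find hex - 1)) :=
        (hcom2 i a).pow_pow m' (Nat.find hex - 1)
      rw [← Module.End.mul_apply, hc, Module.End.mul_apply, hm', map_zero]
end

section
/- Let V be a vector space over a field F and let T, S be F-linear endomorphisms of V such that T is locally nilpotent and T∘S − S∘T = S. Then S = 0. -/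
/- STATEMENT 16: if T is locally nilpotent and T∘S − S∘T = S, then S = 0. -/

theorem eq_zero_of_locallyNilpotent_bracket (F : Type*) [Field F]
    (V : Type*) [AddCommGroup V] [Module F V]
    (T S : Module.End F V)
    (hT : ∀ v : V, ∃ m : ℕ, 0 < m ∧ (T ^ m) v = 0)
    (hTS : T * S - S * T = S) :
    S = 0 := by
  have hST1 : S * T = (T - 1) * S := by
    have h := sub_eq_iff_eq_add.mp hTS
    rw [sub_mul, one_mul, h]; abel
  have hST : ∀ m : ℕ, S * T ^ m = (T - 1) ^ m * S := by
    intro m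
    induction m with
    | zero => simp
    | succ n ih =>
      rw [pow_succ, ← mul_assoc, ih, mul_assoc, hST1, ← mul_assoc, ← pow_succ]
  ext v
  simp only [LinearMap.zero_apply]
  set w := S v with hw
  obtain ⟨m, -, hm⟩ := hT v
  obtain ⟨k, -, hk⟩ := hT w
  have h1 : ((T - 1) ^ m) w = 0 := by
    have h := congrArg (fun f : Module.End F V => f v) (hST m)
    simpa [Module.End.mul_apply, hm, hw] using h.symm
  have hcop : IsCoprime ((Polynomial.X : Polynomial F) ^ k)
      ((Polynomial.X - 1) ^ m) :=
    IsCoprime.pow ⟨1, -1, by ring⟩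
  obtain ⟨a, b, hab⟩ := hcop
  have h2 := congrArg (Polynomial.aeval T) hab
  simp only [map_add, map_mul, map_pow, Polynomial.aeval_X, map_sub, map_one] at h2
  have h3 := congrArg (fun f : Module.End F V => f w) h2
  simpa [Module.End.mul_apply, hk, h1] using h3.symm
end

section
/- Let A be a commutative associative F-algebra with identity that is an integral domain, let D be a commutative F-subspace of Der A (i.e., d₁∘d₂ = d₂∘d₁ for all d₁,d₂ ∈ D), and let W = A·D = span{u·d : u ∈ A, d ∈ D}, a Lie subalgebra of Der A. For a nonzero d ∈ D, the adjoint operator ad_d : u ↦ [d,u] is locally nilpotent on W if and only if d is locally nilpotent on A. -/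
/-! The generators `u • e` (`u ∈ A`, `e ∈ D`) of `W` satisfy `ad_d (u • e) = d(u) • e`, because `d`
is a derivation commuting with `e`; hence `ad_d ^ m (u • e) = d^m(u) • e`. So `d^m` killing `u`
makes `ad_d ^ m` kill `u • e`, and the elements killed by a power of `ad_d` form a submodule (the
generalized `0`-eigenspace), which therefore contains `W`. Conversely, `ad_d ^ m (a • d) = 0` gives
`d^m(a) • d = 0`, and as `A` is a domain and `d ≠ 0` this forces `d^m(a) = 0`. -/

attribute [local instance] LieRing.ofAssociativeRing

namespace Module.End

variable {R M : Type*} [CommRing R] [AddCommGroup M] [Module R M]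

theorem exists_pos_pow_apply_eq_zero_iff_mem_maxGenEigenspace_zero (f : End R M) (x : M) :
    (∃ m : ℕ, 0 < m ∧ (f ^ m) x = 0) ↔ x ∈ f.maxGenEigenspace 0 := by
  simp only [mem_maxGenEigenspace, zero_smul, sub_zero]
  refine ⟨fun ⟨m, _, hm⟩ => ⟨m, hm⟩, fun ⟨m, hm⟩ => ⟨m + 1, m.succ_pos, ?_⟩⟩
  rw [pow_succ', mul_apply, hm, map_zero]

end Module.End

section Derivation

variable {R A : Type*} [CommRing R] [CommRing A] [Algebra R A] {d e : Module.End R A}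

theorem ad_mulLeft_comp (hd : ∀ u v : A, d (u * v) = d u * v + u * d v) (hde : d * e = e * d)
    (u : A) :
    LieAlgebra.ad R (Module.End R A) d ((LinearMap.mulLeft R u).comp e) =
      (LinearMap.mulLeft R (d u)).comp e := by
  ext v
  have hdev : d (e v) = e (d v) := LinearMap.congr_fun hde v
  simp only [LieAlgebra.ad_apply, Ring.lie_def, LinearMap.sub_apply, Module.End.mul_apply,
    LinearMap.comp_apply, LinearMap.mulLeft_apply, hd, hdev]
  ring

theorem ad_pow_mulLeft_comp (hd : ∀ u v : A, d (u * v) = d u * v + u * d v)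
    (hde : d * e = e * d) (m : ℕ) (u : A) :
    (LieAlgebra.ad R (Module.End R A) d ^ m) ((LinearMap.mulLeft R u).comp e) =
      (LinearMap.mulLeft R ((d ^ m) u)).comp e := by
  induction m generalizing u with
  | zero => simp
  | succ m ih =>
    rw [pow_succ, Module.End.mul_apply, ad_mulLeft_comp hd hde, ih, pow_succ,
      Module.End.mul_apply]

theorem mulLeft_comp_eq_zero_iff [NoZeroDivisors A] (he : e ≠ 0) (u : A) :
    (LinearMap.mulLeft R u).comp e = 0 ↔ u = 0 := by
  refine ⟨fun h => ?_, fun h => by simp [h]⟩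
  obtain ⟨v, hv⟩ : ∃ v, e v ≠ 0 := by
    by_contra! h
    exact he (LinearMap.ext h)
  exact (mul_eq_zero.mp (LinearMap.congr_fun h v)).resolve_right hv

end Derivation

theorem ad_locallyNilpotent_iff_general (F : Type*) [Field F]
    (A : Type*) [CommRing A] [IsDomain A] [Algebra F A]
    (D : Submodule F (Module.End F A))
    (hder : ∀ d ∈ D, ∀ u v : A, d (u * v) = d u * v + u * d v)
    (hcomm : ∀ d ∈ D, ∀ e ∈ D, d * e = e * d)
    (W : Submodule F (Module.End F A))
    (hW : W = Submodule.span F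
      {w : Module.End F A | ∃ (u : A) (e : Module.End F A), e ∈ D ∧
        w = (LinearMap.mulLeft F u).comp e})
    (d : Module.End F A) (hd : d ∈ D) (hd0 : d ≠ 0) :
    (∀ x ∈ W, ∃ m : ℕ, 0 < m ∧
        ((LieAlgebra.ad F (Module.End F A) d) ^ m) x = 0) ↔
      (∀ a : A, ∃ m : ℕ, 0 < m ∧ (d ^ m) a = 0) := by
  have hpow (m : ℕ) (u : A) {e : Module.End F A} (he : e ∈ D) :
      (LieAlgebra.ad F (Module.End F A) d ^ m) ((LinearMap.mulLeft F u).comp e) =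
        (LinearMap.mulLeft F ((d ^ m) u)).comp e :=
    ad_pow_mulLeft_comp (hder d hd) (hcomm d hd e he) m u
  constructor
  · intro hW_nil a
    have ha : (LinearMap.mulLeft F a).comp d ∈ W := hW ▸ Submodule.subset_span ⟨a, d, hd, rfl⟩
    obtain ⟨m, hm_pos, hm⟩ := hW_nil _ ha
    rw [hpow m a hd, mulLeft_comp_eq_zero_iff hd0] at hm
    exact ⟨m, hm_pos, hm⟩
  · intro hA_nil x hx
    rw [Module.End.exists_pos_pow_apply_eq_zero_iff_mem_maxGenEigenspace_zero]
    refine Submodule.span_le.mpr ?_ (hW ▸ hx)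
    rintro _ ⟨u, e, he, rfl⟩
    obtain ⟨m, hm_pos, hm⟩ := hA_nil u
    rw [SetLike.mem_coe, ← Module.End.exists_pos_pow_apply_eq_zero_iff_mem_maxGenEigenspace_zero]
    exact ⟨m, hm_pos, by rw [hpow m u he, hm, LinearMap.mulLeft_zero_eq_zero, LinearMap.zero_comp]⟩

theorem ad_locallyNilpotent_iff (F : Type*) [Field F] [CharZero F]
    (A : Type*) [CommRing A] [IsDomain A] [Algebra F A]
    (D : Submodule F (Module.End F A))
    (hder : ∀ d ∈ D, ∀ u v : A, d (u * v) = d u * v + u * d v)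
    (hcomm : ∀ d ∈ D, ∀ e ∈ D, d * e = e * d)
    (W : Submodule F (Module.End F A))
    (hW : W = Submodule.span F
      {w : Module.End F A | ∃ (u : A) (e : Module.End F A), e ∈ D ∧
        w = (LinearMap.mulLeft F u).comp e})
    (d : Module.End F A) (hd : d ∈ D) (hd0 : d ≠ 0) :
    (∀ x ∈ W, ∃ m : ℕ, 0 < m ∧
        ((LieAlgebra.ad F (Module.End F A) d) ^ m) x = 0) ↔
      (∀ a : A, ∃ m : ℕ, 0 < m ∧ (d ^ m) a = 0) :=
  ad_locallyNilpotent_iff_general F A D hder hcomm W hW d hd hd0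
end
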